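/- Knight's identity: for the check function h_γ(t) = t(γ - 1{t ≤ 0}) with γ ∈ (0,1), and any real numbers w and v, h_γ(w - v) - h_γ(w) = -v(γ - 1{w ≤ 0}) + ∫_0^v (1{w ≤ z} - 1{w ≤ 0}) dz. -/

import Mathlib

/-
Writing the check function as `h_γ(t) = γ t + max(-t, 0)`, the left-hand side is
`-γ v + max(v - w, 0) - max(-w, 0)`. On the other side, `z ↦ 1{w ≤ z}` is the right derivative
of `z ↦ max(z - w, 0)`, so the integral equals `max(v - w, 0) - max(-w, 0) - v 1{w ≤ 0}`.
-/

noncomputable def checkFn (γ t : ℝ) : ℝ := t * (γ - if t ≤ 0 then 1 else 0)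

open Set intervalIntegral

lemma checkFn_eq_mul_add_max (γ t : ℝ) : checkFn γ t = γ * t + max (-t) 0 := by
  unfold checkFn
  split_ifs with ht
  · rw [max_eq_left (by linarith)]; ring
  · rw [max_eq_right (by linarith)]; ring

lemma hasDerivWithinAt_max_sub_Ioi (w z : ℝ) :
    HasDerivWithinAt (fun y => max (y - w) 0) (if w ≤ z then 1 else 0) (Ioi z) z := by
  split_ifs with hwz
  · refine ((hasDerivAt_id z).sub_const w).hasDerivWithinAt.congr (fun y hy => ?_) ?_
    · exact max_eq_left (by simp only [mem_Ioi] at hy; linarith)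
    · exact max_eq_left (by linarith)
  · refine (hasDerivAt_const z (0 : ℝ)).congr_of_eventuallyEq ?_ |>.hasDerivWithinAt
    filter_upwards [Iio_mem_nhds (not_le.mp hwz)] with y hy
    exact max_eq_right (by simp only [mem_Iio] at hy; linarith)

lemma intervalIntegrable_ite_le (w a b : ℝ) :
    IntervalIntegrable (fun z => if w ≤ z then (1 : ℝ) else 0) MeasureTheory.volume a b := by
  refine Monotone.intervalIntegrable fun x y hxy => ?_
  by_cases hwx : w ≤ x
  · simp [hwx, hwx.trans hxy]
  · simp only [hwx, if_false]; split_ifs <;> norm_num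

lemma integral_ite_le (w a b : ℝ) :
    ∫ z in a..b, (if w ≤ z then (1 : ℝ) else 0) = max (b - w) 0 - max (a - w) 0 :=
  integral_eq_sub_of_hasDeriv_right (by fun_prop)
    (fun z _ => hasDerivWithinAt_max_sub_Ioi w z) (intervalIntegrable_ite_le w a b)

theorem stmt_2_general (γ : ℝ) (w v : ℝ) :
    checkFn γ (w - v) - checkFn γ w =
      -v * (γ - if w ≤ 0 then 1 else 0) +
        ∫ z in (0:ℝ)..v, ((if w ≤ z then (1:ℝ) else 0) - (if w ≤ 0 then (1:ℝ) else 0)) := by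
  rw [integral_sub (intervalIntegrable_ite_le w 0 v) intervalIntegrable_const,
    integral_ite_le, integral_const, smul_eq_mul, checkFn_eq_mul_add_max,
    checkFn_eq_mul_add_max, neg_sub, zero_sub, sub_zero]
  ring

theorem stmt_2 (γ : ℝ) (hγ : γ ∈ Set.Ioo (0:ℝ) 1) (w v : ℝ) :
    checkFn γ (w - v) - checkFn γ w =
      -v * (γ - if w ≤ 0 then 1 else 0) +
        ∫ z in (0:ℝ)..v, ((if w ≤ z then (1:ℝ) else 0) - (if w ≤ 0 then (1:ℝ) else 0)) :=
  stmt_2_general γ w v
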